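/- Let P be a set of prime numbers. For every complex number s with Re(s) > 1, the series Σ n^{-s}, taken over all positive squarefree integers n whose prime factors all lie in P, converges absolutely, the infinite product ∏_{p ∈ P} (1 + p^{-s}) over the primes p in P converges, and the two are equal: Σ_{n squarefree, all prime factors in P} n^{-s} = ∏_{p ∈ P} (1 + p^{-s}). -/
import Mathlib

open Complex
open scoped Classical

private noncomputable def epsf (P : Set ℕ) (s : ℂ) : ℕ → ℂ := fun n =>
  if Squarefree n ∧ ∀ p : ℕ, p.Prime → p ∣ n → p ∈ P then ((n : ℕ) : ℂ) ^ (-s) else 0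

private lemma epsf_cond_one (P : Set ℕ) :
    Squarefree 1 ∧ ∀ p : ℕ, p.Prime → p ∣ 1 → p ∈ P := by
  refine ⟨squarefree_one, fun p hp hpd => ?_⟩
  exact absurd (Nat.dvd_one.mp hpd ▸ hp.one_lt) (by norm_num)

private lemma epsf_one (P : Set ℕ) (s : ℂ) : epsf P s 1 = 1 := by
  rw [epsf, if_pos (epsf_cond_one P)]
  simp

private lemma epsf_zero (P : Set ℕ) (s : ℂ) : epsf P s 0 = 0 := by
  rw [epsf, if_neg]
  rintro ⟨h, -⟩
  exact not_squarefree_zero h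

private lemma epsf_mul (P : Set ℕ) (s : ℂ) {m n : ℕ} (h : Nat.Coprime m n) :
    epsf P s (m * n) = epsf P s m * epsf P s n := by
  unfold epsf
  by_cases hm : Squarefree m ∧ ∀ p : ℕ, p.Prime → p ∣ m → p ∈ P
  · by_cases hn : Squarefree n ∧ ∀ p : ℕ, p.Prime → p ∣ n → p ∈ P
    · rw [if_pos hm, if_pos hn, if_pos]
      · push_cast
        have h2 := mul_cpow_ofReal_nonneg (Nat.cast_nonneg m) (Nat.cast_nonneg n) (-s)
        push_cast at h2
        exact h2
      · refine ⟨(Nat.squarefree_mul h).mpr ⟨hm.1, hn.1⟩, fun p hp hpd => ?_⟩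
        rcases (Nat.Prime.dvd_mul hp).mp hpd with h' | h'
        · exact hm.2 p hp h'
        · exact hn.2 p hp h'
    · rw [if_neg hn, mul_zero, if_neg]
      rintro ⟨hsq, hdvd⟩
      exact hn ⟨((Nat.squarefree_mul h).mp hsq).2,
        fun p hp hpd => hdvd p hp (hpd.mul_left m)⟩
  · rw [if_neg hm, zero_mul, if_neg]
    rintro ⟨hsq, hdvd⟩
    exact hm ⟨((Nat.squarefree_mul h).mp hsq).1,
      fun p hp hpd => hdvd p hp (hpd.mul_right n)⟩

private lemma epsf_norm_summable (P : Set ℕ) {s : ℂ} (hs : 1 < s.re) :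
    Summable (fun n => ‖epsf P s n‖) := by
  have hsum : Summable (fun n : ℕ => (n : ℝ) ^ (-s.re)) :=
    Real.summable_nat_rpow.mpr (by linarith)
  refine hsum.of_nonneg_of_le (fun n => norm_nonneg _) (fun n => ?_)
  rcases eq_or_ne n 0 with rfl | hn
  · simp [epsf_zero, Real.rpow_natCast]
    positivity
  · calc ‖epsf P s n‖ ≤ ‖((n : ℕ) : ℂ) ^ (-s)‖ := by
          unfold epsf; split <;> simp
    _ = (n : ℝ) ^ (-s.re) := by
          rw [Complex.norm_natCast_cpow_of_pos (Nat.pos_of_ne_zero hn), neg_re]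

private lemma epsf_prime_pow_tsum (P : Set ℕ) (s : ℂ) (hs : 1 < s.re) {p : ℕ}
    (hp : p.Prime) :
    ∑' e : ℕ, epsf P s (p ^ e) = 1 + (if p ∈ P then ((p : ℕ) : ℂ) ^ (-s) else 0) := by
  have hvanish : ∀ e ∉ ({0, 1} : Finset ℕ), epsf P s (p ^ e) = 0 := by
    intro e he
    simp only [Finset.mem_insert, Finset.mem_singleton] at he
    push_neg at he
    rw [epsf, if_neg]
    rintro ⟨hsq, -⟩
    have hdvd : p * p ∣ p ^ e := by
      have : p ^ 2 ∣ p ^ e := pow_dvd_pow p (by omega)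
      simpa [sq] using this
    exact absurd (hsq p hdvd) (by simp [Nat.isUnit_iff, hp.ne_one])
  rw [tsum_eq_sum hvanish, Finset.sum_insert (by norm_num), Finset.sum_singleton,
    pow_zero, pow_one, epsf_one]
  congr 1
  unfold epsf
  by_cases hpP : p ∈ P
  · rw [if_pos ⟨hp.squarefree,
      fun q hq hqd => ((Nat.prime_dvd_prime_iff_eq hq hp).mp hqd) ▸ hpP⟩, if_pos hpP]
  · rw [if_neg, if_neg hpP]
    rintro ⟨-, h2⟩
    exact hpP (h2 p hp dvd_rfl)

/-- For a set `P` of primes and `Re s > 1`, the series `∑ n^{-s}` over positive squarefree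
integers `n` with all prime factors in `P` converges absolutely, the product
`∏_{p ∈ P} (1 + p^{-s})` converges, and the two are equal. -/
theorem euler_product_squarefree (P : Set ℕ) (hP : ∀ p ∈ P, p.Prime)
    (s : ℂ) (hs : 1 < s.re) :
    Summable (fun n : {n : ℕ | Squarefree n ∧ ∀ p : ℕ, p.Prime → p ∣ n → p ∈ P} =>
        ‖((n : ℕ) : ℂ) ^ (-s)‖) ∧
    Multipliable (fun p : P => 1 + ((p : ℕ) : ℂ) ^ (-s)) ∧
    (∑' n : {n : ℕ | Squarefree n ∧ ∀ p : ℕ, p.Prime → p ∣ n → p ∈ P},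
        ((n : ℕ) : ℂ) ^ (-s)) = ∏' p : P, (1 + ((p : ℕ) : ℂ) ^ (-s)) := by
  set S : Set ℕ := {n : ℕ | Squarefree n ∧ ∀ p : ℕ, p.Prime → p ∣ n → p ∈ P} with hS
  have hsumf := epsf_norm_summable P hs
  have hprod := EulerProduct.eulerProduct_hasProd (f := epsf P s) (epsf_one P s)
    (fun {m n} h => epsf_mul P s h) hsumf (epsf_zero P s)
  have heq : (fun p : Nat.Primes => ∑' e : ℕ, epsf P s ((p : ℕ) ^ e)) =
      fun p : Nat.Primes => 1 + (if (p : ℕ) ∈ P then ((p : ℕ) : ℂ) ^ (-s) else 0) :=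
    funext fun p => epsf_prime_pow_tsum P s hs p.2
  rw [heq] at hprod
  set T : Set Nat.Primes := {p : Nat.Primes | (p : ℕ) ∈ P} with hT
  have hsupp : Function.mulSupport
      (fun p : Nat.Primes => 1 + (if (p : ℕ) ∈ P then ((p : ℕ) : ℂ) ^ (-s) else 0)) ⊆ T := by
    intro p hp
    by_contra h
    exact hp (by simp [hT] at h; simp [h])
  have hprodT := (hasProd_subtype_iff_of_mulSupport_subset hsupp).mpr hprod
  have hTfun : (fun p : T =>
      1 + (if ((p : Nat.Primes) : ℕ) ∈ P then (((p : Nat.Primes) : ℕ) : ℂ) ^ (-s) else 0)) =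
      fun p : T => 1 + (((p : Nat.Primes) : ℕ) : ℂ) ^ (-s) :=
    funext fun p => by rw [if_pos (show ((p : Nat.Primes) : ℕ) ∈ P from p.2)]
  rw [show ((fun p : Nat.Primes => 1 + (if (p : ℕ) ∈ P then ((p : ℕ) : ℂ) ^ (-s) else 0)) ∘
      (Subtype.val : T → Nat.Primes)) = _ from hTfun] at hprodT
  let e : P ≃ T :=
    { toFun := fun p => ⟨⟨(p : ℕ), hP p p.2⟩, p.2⟩
      invFun := fun q => ⟨((q : Nat.Primes) : ℕ), q.2⟩
      left_inv := fun p => rfl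
      right_inv := fun q => rfl }
  have hprodP0 : HasProd
      ((fun p : T => 1 + (((p : Nat.Primes) : ℕ) : ℂ) ^ (-s)) ∘ e) (∑' n, epsf P s n) :=
    e.hasProd_iff.mpr hprodT
  have hprodP : HasProd (fun p : P => 1 + ((p : ℕ) : ℂ) ^ (-s)) (∑' n, epsf P s n) := hprodP0
  have hind : epsf P s = S.indicator (fun n => ((n : ℕ) : ℂ) ^ (-s)) := by
    funext n
    simp only [epsf, Set.indicator, hS, Set.mem_setOf_eq]
  have hcoe : ∀ n : S, epsf P s (n : ℕ) = ((n : ℕ) : ℂ) ^ (-s) := fun n => by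
    have hn : Squarefree (n : ℕ) ∧ ∀ p : ℕ, p.Prime → p ∣ (n : ℕ) → p ∈ P := n.2
    simp only [epsf]
    exact if_pos hn
  refine ⟨?_, hprodP.multipliable, ?_⟩
  · refine (hsumf.subtype S).congr fun n => ?_
    simp only [Function.comp_apply, hcoe n]
  · rw [hprodP.tprod_eq]
    rw [show (∑' n, epsf P s n) = ∑' n : S, epsf P s (n : ℕ) by
      rw [tsum_subtype S (epsf P s), Set.indicator_eq_self.mpr ?_]
      intro n hn
      by_contra h
      exact hn (by simp only [epsf] at *; exact if_neg h)]
    exact tsum_congr fun n => (hcoe n).symm
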